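/- arXiv:2402.03107 — 8 statements merged into one kernel-verified Lean document; each statement's English description precedes it below -/
import Mathlib

section
/- Let T be a set of permutation patterns of arbitrary lengths. Then for every n: (a) ⟨S_n(T)⟩ = ⟨S_n(T^{-1})⟩ = ⟨S_n(T) ∪ S_n(T^{-1})⟩ as subgroups of S_n; (b) ⟨S_n(T^{rc})⟩ is the conjugate of ⟨S_n(T)⟩ by the decreasing permutation ψ_n, hence ⟨S_n(T)⟩ and ⟨S_n(T^{rc})⟩ are isomorphic groups. -/
/-- A permutation `π ∈ S_n` contains the pattern `τ ∈ S_k` if there is a strictly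
increasing `f : Fin k → Fin n` such that `τ a < τ b ↔ π (f a) < π (f b)`. -/
def PermContains {k n : ℕ} (τ : Equiv.Perm (Fin k)) (π : Equiv.Perm (Fin n)) : Prop :=
  ∃ f : Fin k → Fin n, StrictMono f ∧ ∀ a b : Fin k, τ a < τ b ↔ π (f a) < π (f b)

/-- `avoidSet n T` is `S_n(T)`: the permutations of `Fin n` avoiding every pattern in `T`,
where `T` is a set of permutations of arbitrary lengths. -/
def avoidSet (n : ℕ) (T : Set (Σ k : ℕ, Equiv.Perm (Fin k))) : Set (Equiv.Perm (Fin n)) :=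
  {π | ∀ τ ∈ T, ¬ PermContains τ.2 π}
/-- `T⁻¹ = {τ⁻¹ : τ ∈ T}`. -/
def invSet (T : Set (Σ k : ℕ, Equiv.Perm (Fin k))) : Set (Σ k : ℕ, Equiv.Perm (Fin k)) :=
  (fun τ => (⟨τ.1, τ.2⁻¹⟩ : Σ k : ℕ, Equiv.Perm (Fin k))) '' T

/-- `T^{rc} = {ψ ∘ τ ∘ ψ : τ ∈ T}`, the reverse-complement. -/
def rcSet (T : Set (Σ k : ℕ, Equiv.Perm (Fin k))) : Set (Σ k : ℕ, Equiv.Perm (Fin k)) :=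
  (fun τ => (⟨τ.1, Fin.revPerm * τ.2 * Fin.revPerm⟩ : Σ k : ℕ, Equiv.Perm (Fin k))) '' T

/-!
Pattern containment is preserved by inversion (an occurrence `f` of `τ` in `π` yields the
occurrence `π ∘ f ∘ τ⁻¹` of `τ⁻¹` in `π⁻¹`) and by reverse-complement (conjugate `f` by the
reversals). Hence `S_n(T⁻¹) = S_n(T)⁻¹` and `S_n(T^{rc}) = ψ_n S_n(T) ψ_n`; a set generates
the same subgroup as its inverse, and its conjugate generates the conjugate subgroup.
-/

open Equiv Fin

variable {k n : ℕ}

theorem PermContains.inv {τ : Perm (Fin k)} {π : Perm (Fin n)} (h : PermContains τ π) :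
    PermContains τ⁻¹ π⁻¹ := by
  obtain ⟨f, hf, hc⟩ := h
  refine ⟨fun a => π (f (τ⁻¹ a)), fun a b hab => (hc _ _).mp (by simpa using hab),
    fun a b => ?_⟩
  simpa using hf.lt_iff_lt.symm

theorem PermContains.conj_revPerm {τ : Perm (Fin k)} {π : Perm (Fin n)} (h : PermContains τ π) :
    PermContains (revPerm * τ * revPerm) (revPerm * π * revPerm) := by
  obtain ⟨f, hf, hc⟩ := h
  refine ⟨fun a => rev (f (rev a)), fun a b hab => rev_lt_rev.mpr (hf (rev_lt_rev.mpr hab)),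
    fun a b => ?_⟩
  simpa [Perm.mul_apply] using hc _ _

theorem permContains_inv_iff {τ : Perm (Fin k)} {π : Perm (Fin n)} :
    PermContains τ⁻¹ π⁻¹ ↔ PermContains τ π :=
  ⟨fun h => by simpa using h.inv, PermContains.inv⟩

theorem revPerm_mul_mul_revPerm_involutive :
    Function.Involutive fun σ : Perm (Fin n) => revPerm * σ * revPerm := fun σ => by
  ext x
  simp [Perm.mul_apply]

theorem permContains_conj_revPerm_iff {τ : Perm (Fin k)} {π : Perm (Fin n)} :
    PermContains (revPerm * τ * revPerm) (revPerm * π * revPerm) ↔ PermContains τ π := by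
  refine ⟨fun h => ?_, PermContains.conj_revPerm⟩
  simpa only [revPerm_mul_mul_revPerm_involutive _] using h.conj_revPerm

theorem avoidSet_image (T : Set (Σ k : ℕ, Perm (Fin k)))
    (f : (Σ k : ℕ, Perm (Fin k)) → Σ k : ℕ, Perm (Fin k)) (g : Perm (Fin n) ≃ Perm (Fin n))
    (hfg : ∀ τ π, PermContains (f τ).2 (g π) ↔ PermContains τ.2 π) :
    avoidSet n (f '' T) = g '' avoidSet n T := by
  ext π
  rw [g.image_eq_preimage_symm]
  simp only [avoidSet, Set.mem_ofPred_eq, Set.mem_preimage, Set.forall_mem_image]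
  refine forall₂_congr fun τ _ => ?_
  rw [← hfg τ, g.apply_symm_apply]

theorem avoidSet_invSet (T : Set (Σ k : ℕ, Perm (Fin k))) :
    avoidSet n (invSet T) = (avoidSet n T)⁻¹ := by
  rw [invSet, avoidSet_image T _ (Equiv.inv _) fun _ _ => permContains_inv_iff]
  exact Set.image_inv_eq_inv

theorem avoidSet_rcSet (T : Set (Σ k : ℕ, Perm (Fin k))) :
    avoidSet n (rcSet T) = MulAut.conj revPerm '' avoidSet n T :=
  avoidSet_image T _ (MulAut.conj revPerm).toEquiv fun _ _ => permContains_conj_revPerm_iff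

theorem closure_avoid_inv_and_rc (T : Set (Σ k : ℕ, Equiv.Perm (Fin k))) (n : ℕ) :
    Subgroup.closure (avoidSet n (invSet T)) = Subgroup.closure (avoidSet n T) ∧
    Subgroup.closure (avoidSet n T ∪ avoidSet n (invSet T)) =
      Subgroup.closure (avoidSet n T) ∧
    Subgroup.closure (avoidSet n (rcSet T)) =
      Subgroup.map (MulAut.conj (Fin.revPerm : Equiv.Perm (Fin n))).toMonoidHom
        (Subgroup.closure (avoidSet n T)) ∧
    Nonempty (Subgroup.closure (avoidSet n T) ≃* Subgroup.closure (avoidSet n (rcSet T))) := by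
  have hinv : Subgroup.closure (avoidSet n (invSet T)) = Subgroup.closure (avoidSet n T) := by
    rw [avoidSet_invSet, Subgroup.closure_inv]
  have hrc : Subgroup.closure (avoidSet n (rcSet T)) =
      (Subgroup.closure (avoidSet n T)).map (MulAut.conj (revPerm : Perm (Fin n))).toMonoidHom := by
    rw [avoidSet_rcSet, MonoidHom.map_closure]
    rfl
  refine ⟨hinv, by rw [Subgroup.closure_union, hinv, sup_idem], hrc, ?_⟩
  exact ⟨((MulAut.conj revPerm).subgroupMap _).trans (MulEquiv.subgroupCongr hrc.symm)⟩
end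

section
/- Let T be a set of permutation patterns of arbitrary lengths such that the decreasing permutation ψ_k does not belong to T for any k ≥ 1. Then for every n, ⟨S_n(T)⟩ = ⟨S_n(T) ∪ S_n(T^r) ∪ S_n(T^c) ∪ S_n(T^{rc})⟩ as subgroups of S_n. -/
/-- `T^r = {τ ∘ ψ : τ ∈ T}`, the reverse. -/
def revSet (T : Set (Σ k : ℕ, Equiv.Perm (Fin k))) : Set (Σ k : ℕ, Equiv.Perm (Fin k)) :=
  (fun τ => (⟨τ.1, τ.2 * Fin.revPerm⟩ : Σ k : ℕ, Equiv.Perm (Fin k))) '' T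

/-- `T^c = {ψ ∘ τ : τ ∈ T}`, the complement. -/
def compSet (T : Set (Σ k : ℕ, Equiv.Perm (Fin k))) : Set (Σ k : ℕ, Equiv.Perm (Fin k)) :=
  (fun τ => (⟨τ.1, Fin.revPerm * τ.2⟩ : Σ k : ℕ, Equiv.Perm (Fin k))) '' T

lemma revPerm_sq {k : ℕ} : (Fin.revPerm : Equiv.Perm (Fin k)) * Fin.revPerm = 1 := by
  ext a; simp

lemma aux_rev {k n : ℕ} {τ : Equiv.Perm (Fin k)} {π : Equiv.Perm (Fin n)}
    (h : PermContains τ π) : PermContains (τ * Fin.revPerm) (π * Fin.revPerm) := by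
  obtain ⟨f, hf, hmatch⟩ := h
  refine ⟨fun a => (f a.rev).rev, ?_, ?_⟩
  · intro a b hab
    exact Fin.rev_lt_rev.mpr (hf (Fin.rev_lt_rev.mpr hab))
  · intro a b
    simpa [Equiv.Perm.mul_apply, Fin.rev_rev] using hmatch a.rev b.rev

lemma aux_comp {k n : ℕ} {τ : Equiv.Perm (Fin k)} {π : Equiv.Perm (Fin n)}
    (h : PermContains τ π) : PermContains (Fin.revPerm * τ) (Fin.revPerm * π) := by
  obtain ⟨f, hf, hmatch⟩ := h
  refine ⟨f, hf, fun a b => ?_⟩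
  simp only [Equiv.Perm.mul_apply, Fin.revPerm_apply, Fin.rev_lt_rev]
  exact hmatch b a

lemma contains_rev_iff {k n : ℕ} {τ : Equiv.Perm (Fin k)} {π : Equiv.Perm (Fin n)} :
    PermContains (τ * Fin.revPerm) π ↔ PermContains τ (π * Fin.revPerm) := by
  constructor
  · intro h
    have := aux_rev h
    rwa [mul_assoc, revPerm_sq, mul_one] at this
  · intro h
    have := aux_rev h
    rwa [mul_assoc, revPerm_sq, mul_one] at this

lemma contains_comp_iff {k n : ℕ} {τ : Equiv.Perm (Fin k)} {π : Equiv.Perm (Fin n)} :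
    PermContains (Fin.revPerm * τ) π ↔ PermContains τ (Fin.revPerm * π) := by
  constructor
  · intro h
    have := aux_comp h
    rwa [← mul_assoc, revPerm_sq, one_mul] at this
  · intro h
    have := aux_comp h
    rwa [← mul_assoc, revPerm_sq, one_mul] at this

lemma contains_rc_iff {k n : ℕ} {τ : Equiv.Perm (Fin k)} {π : Equiv.Perm (Fin n)} :
    PermContains (Fin.revPerm * τ * Fin.revPerm) π ↔
      PermContains τ (Fin.revPerm * π * Fin.revPerm) := by
  rw [contains_rev_iff, contains_comp_iff, mul_assoc]

/-- The only pattern contained in the decreasing permutation is decreasing. -/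
lemma contains_of_revPerm {k n : ℕ} {τ : Equiv.Perm (Fin k)}
    (h : PermContains τ (Fin.revPerm : Equiv.Perm (Fin n))) : τ = Fin.revPerm := by
  obtain ⟨f, hf, hmatch⟩ := h
  have hanti : ∀ a b : Fin k, τ a < τ b ↔ b < a := by
    intro a b
    rw [hmatch a b]
    simp only [Fin.revPerm_apply, Fin.rev_lt_rev]
    exact hf.lt_iff_lt
  have hmono : StrictMono (fun a : Fin k => (τ a).rev) := by
    intro a b hab
    exact Fin.rev_lt_rev.mpr ((hanti b a).mpr hab)
  have hrange : Set.range (fun a : Fin k => (τ a).rev) = Set.range (id : Fin k → Fin k) := by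
    rw [Set.range_id]
    apply Set.eq_univ_of_forall
    intro x
    exact ⟨τ.symm x.rev, by simp⟩
  haveI hwf : WellFoundedLT (Fin k) := inferInstance
  have := (@StrictMono.range_inj (Fin k) (Fin k) _ _ hwf _ _ hmono strictMono_id).1 hrange
  refine Equiv.ext fun a => ?_
  have h2 := congrFun this a
  simp only [id_eq] at h2
  simpa [Fin.revPerm_apply] using congrArg Fin.rev h2

lemma all_contains_zero {n : ℕ} (τ : Equiv.Perm (Fin 0)) (π : Equiv.Perm (Fin n)) :
    PermContains τ π :=
  ⟨fun a => a.elim0, fun a => a.elim0, fun a => a.elim0⟩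

theorem closure_avoid_union_rev_comp_rc (T : Set (Σ k : ℕ, Equiv.Perm (Fin k)))
    (hpsi : ∀ k : ℕ, 1 ≤ k → (⟨k, Fin.revPerm⟩ : Σ k : ℕ, Equiv.Perm (Fin k)) ∉ T)
    (n : ℕ) :
    Subgroup.closure (avoidSet n T) =
      Subgroup.closure (avoidSet n T ∪ avoidSet n (revSet T) ∪ avoidSet n (compSet T) ∪
        avoidSet n (rcSet T)) := by
  by_cases h0 : ∃ τ ∈ T, τ.1 = 0
  · -- T contains a length-0 pattern: all avoid sets are empty
    obtain ⟨⟨k, τ0⟩, hτ0, hk⟩ := h0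
    subst hk
    have hA : avoidSet n T = ∅ := by
      ext π; simp only [Set.mem_empty_iff_false, iff_false]
      intro h; exact h _ hτ0 (all_contains_zero _ _)
    have hR : avoidSet n (revSet T) = ∅ := by
      ext π; simp only [Set.mem_empty_iff_false, iff_false]
      intro h; exact h _ ⟨_, hτ0, rfl⟩ (all_contains_zero _ _)
    have hC : avoidSet n (compSet T) = ∅ := by
      ext π; simp only [Set.mem_empty_iff_false, iff_false]
      intro h; exact h _ ⟨_, hτ0, rfl⟩ (all_contains_zero _ _)
    have hRC : avoidSet n (rcSet T) = ∅ := by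
      ext π; simp only [Set.mem_empty_iff_false, iff_false]
      intro h; exact h _ ⟨_, hτ0, rfl⟩ (all_contains_zero _ _)
    rw [hA, hR, hC, hRC]
    simp
  · push_neg at h0
    -- the reverse permutation avoids T
    have hpsiA : (Fin.revPerm : Equiv.Perm (Fin n)) ∈ avoidSet n T := by
      intro τ hτ hcon
      have := contains_of_revPerm hcon
      have hk1 : 1 ≤ τ.1 := Nat.one_le_iff_ne_zero.mpr (h0 τ hτ)
      apply hpsi τ.1 hk1
      have : τ = ⟨τ.1, Fin.revPerm⟩ := by
        cases τ; simp_all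
      rwa [← this]
    -- characterizations of the other avoid sets
    have hRmem : ∀ π : Equiv.Perm (Fin n),
        π ∈ avoidSet n (revSet T) ↔ π * Fin.revPerm ∈ avoidSet n T := by
      intro π
      constructor
      · intro h τ hτ hcon
        exact h ⟨τ.1, τ.2 * Fin.revPerm⟩ ⟨τ, hτ, rfl⟩ (contains_rev_iff.mpr hcon)
      · rintro h τ ⟨σ, hσ, rfl⟩ hcon
        exact h σ hσ (contains_rev_iff.mp hcon)
    have hCmem : ∀ π : Equiv.Perm (Fin n),
        π ∈ avoidSet n (compSet T) ↔ Fin.revPerm * π ∈ avoidSet n T := by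
      intro π
      constructor
      · intro h τ hτ hcon
        exact h ⟨τ.1, Fin.revPerm * τ.2⟩ ⟨τ, hτ, rfl⟩ (contains_comp_iff.mpr hcon)
      · rintro h τ ⟨σ, hσ, rfl⟩ hcon
        exact h σ hσ (contains_comp_iff.mp hcon)
    have hRCmem : ∀ π : Equiv.Perm (Fin n),
        π ∈ avoidSet n (rcSet T) ↔ Fin.revPerm * π * Fin.revPerm ∈ avoidSet n T := by
      intro π
      constructor
      · intro h τ hτ hcon
        exact h ⟨τ.1, Fin.revPerm * τ.2 * Fin.revPerm⟩ ⟨τ, hτ, rfl⟩ (contains_rc_iff.mpr hcon)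
      · rintro h τ ⟨σ, hσ, rfl⟩ hcon
        exact h σ hσ (contains_rc_iff.mp hcon)
    apply le_antisymm
    · apply Subgroup.closure_mono
      intro x hx
      exact Or.inl (Or.inl (Or.inl hx))
    · rw [Subgroup.closure_le]
      have hcl : ∀ x ∈ avoidSet n T, x ∈ Subgroup.closure (avoidSet n T) :=
        fun x hx => Subgroup.subset_closure hx
      have hψ : (Fin.revPerm : Equiv.Perm (Fin n)) ∈ Subgroup.closure (avoidSet n T) :=
        hcl _ hpsiA
      intro x hx
      rcases hx with ((hx | hx) | hx) | hx
      · exact hcl _ hx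
      · have h1 := hcl _ ((hRmem x).mp hx)
        have : x = (x * Fin.revPerm) * Fin.revPerm := by
          rw [mul_assoc, revPerm_sq, mul_one]
        rw [this]
        exact mul_mem h1 hψ
      · have h1 := hcl _ ((hCmem x).mp hx)
        have : x = Fin.revPerm * (Fin.revPerm * x) := by
          rw [← mul_assoc, revPerm_sq, one_mul]
        rw [this]
        exact mul_mem hψ h1
      · have h1 := hcl _ ((hRCmem x).mp hx)
        have : x = Fin.revPerm * (Fin.revPerm * x * Fin.revPerm) * Fin.revPerm := by
          rw [← mul_assoc, ← mul_assoc, revPerm_sq, one_mul, mul_assoc, revPerm_sq, mul_one]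
        rw [this]
        exact mul_mem (mul_mem hψ h1) hψ
end

section
/- Let G be any subgroup of the symmetric group S_k. Then for every n, the set S_n(S_k \ G) of permutations in S_n avoiding every pattern in the complement of G in S_k is (the underlying set of) a subgroup of S_n; that is, it contains the identity and is closed under composition and inverses. -/
/-!
Pattern containment is compatible with the group structure. The identity contains only identity
patterns; if `π` contains `τ` at positions `f`, then `π⁻¹` contains `τ⁻¹` at positions `π ∘ f ∘ τ⁻¹`;
and if `π * σ` contains `τ` at positions `f`, sorting the values `σ ∘ f` writes `τ = τ₁ * τ₂`
with `τ₁` contained in `π` and `τ₂` contained in `σ`. Hence if `G` is a subgroup, a permutation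
avoiding every pattern outside `G` has all its patterns in `G`, and this property is preserved by
products and inverses.
-/

open Equiv

theorem Function.Injective.exists_strictMono_comp_perm {α : Type*} [LinearOrder α] {k : ℕ}
    {h : Fin k → α} (hh : h.Injective) :
    ∃ g : Fin k → α, StrictMono g ∧ ∃ ρ : Perm (Fin k), ∀ a, g (ρ a) = h a :=
  ⟨h ∘ Tuple.sort h,
    (Tuple.monotone_sort h).strictMono_of_injective (hh.comp (Tuple.sort h).injective),
    (Tuple.sort h)⁻¹, fun a => by simp⟩

namespace PermContains

variable {k n : ℕ} {τ : Perm (Fin k)} {π σ : Perm (Fin n)}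

theorem eq_one_of_one (h : PermContains τ (1 : Perm (Fin n))) : τ = 1 := by
  obtain ⟨f, hf, hpat⟩ := h
  refine (Perm.monotone_iff τ).1 (StrictMono.monotone fun a b hab => ?_)
  exact (hpat a b).2 (hf hab)

theorem inv_s4 (h : PermContains τ π) : PermContains τ⁻¹ π⁻¹ := by
  obtain ⟨f, hf, hpat⟩ := h
  refine ⟨fun a => π (f (τ⁻¹ a)), fun a b hab => ?_, fun a b => ?_⟩
  · simpa [← hpat] using hab
  · simpa using hf.lt_iff_lt.symm

theorem exists_mul_eq_of_mul (h : PermContains τ (π * σ)) :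
    ∃ τ₁ τ₂ : Perm (Fin k), τ = τ₁ * τ₂ ∧ PermContains τ₁ π ∧ PermContains τ₂ σ := by
  obtain ⟨f, hf, hpat⟩ := h
  obtain ⟨g, hg, τ₂, hgτ₂⟩ :=
    (σ.injective.comp hf.injective).exists_strictMono_comp_perm (h := fun a => σ (f a))
  refine ⟨τ * τ₂⁻¹, τ₂, by group, ⟨g, hg, fun a b => ?_⟩, ⟨f, hf, fun a b => ?_⟩⟩
  · obtain ⟨a, rfl⟩ := τ₂.surjective a
    obtain ⟨b, rfl⟩ := τ₂.surjective b
    simpa [hgτ₂] using hpat a b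
  · rw [← hg.lt_iff_lt, hgτ₂, hgτ₂]

end PermContains

def patternSubgroup (n : ℕ) {k : ℕ} (G : Subgroup (Perm (Fin k))) : Subgroup (Perm (Fin n)) where
  carrier := {π | ∀ τ, PermContains τ π → τ ∈ G}
  one_mem' τ hτ := hτ.eq_one_of_one ▸ G.one_mem
  mul_mem' {π σ} hπ hσ τ hτ := by
    obtain ⟨τ₁, τ₂, rfl, h₁, h₂⟩ := hτ.exists_mul_eq_of_mul
    exact G.mul_mem (hπ τ₁ h₁) (hσ τ₂ h₂)
  inv_mem' {π} hπ τ hτ := by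
    simpa using G.inv_mem (hπ τ⁻¹ (by simpa using hτ.inv_s4))

theorem avoid_compl_subgroup_is_subgroup (k n : ℕ) (G : Subgroup (Equiv.Perm (Fin k))) :
    ∃ H : Subgroup (Equiv.Perm (Fin n)),
      (H : Set (Equiv.Perm (Fin n))) =
        avoidSet n ((fun τ => (⟨k, τ⟩ : Σ k : ℕ, Equiv.Perm (Fin k))) ''
          (↑G : Set (Equiv.Perm (Fin k)))ᶜ) := by
  refine ⟨patternSubgroup n G, Set.ext fun π => ?_⟩
  simp only [avoidSet, SetLike.mem_coe, Set.mem_ofPred_eq, Set.forall_mem_image,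
    Set.mem_compl_iff, not_imp_not]
  rfl
end

section
/- Let k ≥ 2 and let σ ∈ S_k be the permutation with one-line notation k 1 2 … (k−1) (i.e., σ(1)=k and σ(i)=i−1 for 2 ≤ i ≤ k). Then for every n ≥ k, the subgroup ⟨S_n({132, 231, 321, σ})⟩ of S_n is isomorphic to the symmetric group S_{k−1}. -/
/-- The pattern 132. -/
def p132 : Equiv.Perm (Fin 3) := Equiv.swap 1 2
/-- The pattern 231. -/
def p231 : Equiv.Perm (Fin 3) := finRotate 3
/-- The pattern 321. -/
def p321 : Equiv.Perm (Fin 3) := Equiv.swap 0 2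

/-!
Avoiding 132, 231 and 321 forces a permutation `π` of `{0, …, n}` to be increasing after its
first entry, so `π` is `c 0 1 … (c-1) (c+1) … n` with `c = π 0`, the inverse of the cycle
`Fin.cycleRange c = (0 1 … c)`. Such a `π` contains `k 1 2 … (k-1)` exactly when `c ≥ k - 1`.
Hence `S_n(T)` consists of the inverses of the cycles `(0 1 … c)` with `c ≤ k - 2`: they move only
the first `k - 1` points and generate the full symmetric group on them, since among them are the
`(k-1)`-cycle and the transposition `(0 1)`.
-/

open Equiv

theorem PermContains.of_lt_imp {k n : ℕ} {τ : Perm (Fin k)} {π : Perm (Fin n)}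
    {f : Fin k → Fin n} (hf : StrictMono f) (h : ∀ a b, τ a < τ b → π (f a) < π (f b)) :
    PermContains τ π := by
  have hg : StrictMono (π ∘ f ∘ τ.symm) := fun u v huv => by
    simpa using h (τ.symm u) (τ.symm v) (by simpa using huv)
  exact ⟨f, hf, fun a b => by simpa using (hg.lt_iff_lt (a := τ a) (b := τ b)).symm⟩

theorem finRotate_inv_apply_zero (m : ℕ) : (finRotate (m + 1))⁻¹ 0 = Fin.last m := by
  rw [← Fin.cycleRange_last, Perm.inv_def, Fin.cycleRange_symm_zero]

theorem finRotate_inv_apply_succ {m : ℕ} (j : Fin m) :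
    (finRotate (m + 1))⁻¹ j.succ = j.castSucc := by
  rw [← Fin.cycleRange_last, Perm.inv_def, Fin.cycleRange_symm_succ, Fin.succAbove_last]

theorem Fin.cycleRange_one {n : ℕ} : Fin.cycleRange (1 : Fin (n + 2)) = swap 0 1 := by
  ext j
  rw [Fin.cycleRange_apply, swap_apply_def]
  split_ifs <;> simp only [Fin.ext_iff, Fin.lt_def, Fin.val_zero, Fin.val_one, Fin.val_add_one,
    Fin.val_last] at * <;> (try split_ifs) <;> omega

theorem Fin.closure_range_cycleRange (n : ℕ) :
    Subgroup.closure (Set.range (Fin.cycleRange : Fin n → Perm (Fin n))) = ⊤ := by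
  match n with
  | 0 | 1 => exact Subsingleton.elim _ _
  | n + 2 =>
    refine eq_top_iff.2 ((Perm.closure_cycle_adjacent_swap isCycle_finRotate support_finRotate
      0).ge.trans (Subgroup.closure_mono ?_))
    rintro _ (rfl | rfl)
    · exact ⟨Fin.last _, Fin.cycleRange_last _⟩
    · exact ⟨1, by rw [Fin.cycleRange_one, finRotate_apply, zero_add]⟩

namespace Equiv.Perm

theorem viaEmbeddingHom_castLEEmb_cycleRange {m n : ℕ} (h : m ≤ n) (c : Fin m) :
    viaEmbeddingHom (Fin.castLEEmb h) (Fin.cycleRange c) = Fin.cycleRange (Fin.castLE h c) := by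
  ext x : 1
  rw [viaEmbeddingHom_apply]
  by_cases hx : (x : ℕ) < m
  · obtain ⟨y, rfl⟩ : ∃ y : Fin m, Fin.castLEEmb h y = x := ⟨⟨x, hx⟩, rfl⟩
    rw [viaEmbedding_apply, Fin.ext_iff, Fin.coe_castLEEmb, Fin.val_castLE]
    rcases le_or_gt y c with hy | hy
    · rw [Fin.coe_cycleRange_of_le hy, Fin.coe_cycleRange_of_le (by simpa using hy)]
      simp
    · rw [Fin.cycleRange_of_gt hy, Fin.cycleRange_of_gt (by simpa using hy)]
      simp
  · rw [viaEmbedding_apply_of_notMem _ _ _ (by rintro ⟨y, rfl⟩; exact hx y.isLt),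
      Fin.cycleRange_of_gt (by rw [Fin.lt_def, Fin.val_castLE]; omega)]

theorem closure_range_inv_cycleRange_castLE {m n : ℕ} (h : m ≤ n) :
    Subgroup.closure (Set.range fun c : Fin m => (Fin.cycleRange (Fin.castLE h c))⁻¹) =
      (viaEmbeddingHom (Fin.castLEEmb h)).range := by
  have himage : (Set.range fun c : Fin m => (Fin.cycleRange (Fin.castLE h c))⁻¹) =
      viaEmbeddingHom (Fin.castLEEmb h) '' (Set.range Fin.cycleRange)⁻¹ := by
    rw [Set.inv_range, ← Set.range_comp]
    simp only [Function.comp_def, map_inv, viaEmbeddingHom_castLEEmb_cycleRange]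
  rw [himage, ← MonoidHom.map_closure, Subgroup.closure_inv, Fin.closure_range_cycleRange,
    ← MonoidHom.range_eq_map]

section TailIncreasing

variable {n : ℕ} {π : Perm (Fin (n + 1))}

theorem lt_of_strictMono_comp_succ (hπ : StrictMono (π ∘ Fin.succ)) {x y : Fin (n + 1)}
    (hx : x ≠ 0) (hxy : x < y) : π x < π y := by
  obtain ⟨x, rfl⟩ := Fin.exists_succ_eq.2 hx
  obtain ⟨y, rfl⟩ := Fin.exists_succ_eq.2 (ne_zero_of_lt hxy)
  exact hπ (Fin.succ_lt_succ_iff.1 hxy)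

theorem not_permContains_of_strictMono_comp_succ (hπ : StrictMono (π ∘ Fin.succ)) {k : ℕ}
    {τ : Perm (Fin k)} {i a b : Fin k} (hia : i < a) (hab : a < b) (hba : τ b < τ a) :
    ¬ PermContains τ π := by
  rintro ⟨f, hf, hτ⟩
  have hfa : f a ≠ 0 := ne_zero_of_lt (hf hia)
  exact (lt_of_strictMono_comp_succ hπ hfa (hf hab)).asymm ((hτ b a).1 hba)

theorem strictMono_comp_succ_of_avoids (h132 : ¬ PermContains p132 π)
    (h231 : ¬ PermContains p231 π) (h321 : ¬ PermContains p321 π) :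
    StrictMono (π ∘ Fin.succ) := by
  intro i j hij
  by_contra hji
  replace hji : π j.succ < π i.succ :=
    (not_lt.1 hji).lt_of_ne (π.injective.ne (Fin.succ_injective _ |>.ne hij.ne'))
  have hf : StrictMono ![0, i.succ, j.succ] := by simp [Fin.succ_pos, hij]
  have h0i : π 0 ≠ π i.succ := π.injective.ne (Fin.succ_ne_zero i).symm
  have h0j : π 0 ≠ π j.succ := π.injective.ne (Fin.succ_ne_zero j).symm
  -- positions `0 < i+1 < j+1` form a 132, 231 or 321 according to where `π 0` lies
  rcases lt_or_gt_of_ne h0j with h0 | h0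
  · refine h132 (PermContains.of_lt_imp hf fun a b hab => ?_)
    fin_cases a <;> fin_cases b <;> first | exact absurd hab (by decide) | (simp; order)
  rcases lt_or_gt_of_ne h0i with h1 | h1
  · refine h231 (PermContains.of_lt_imp hf fun a b hab => ?_)
    fin_cases a <;> fin_cases b <;> first | exact absurd hab (by decide) | (simp; order)
  · refine h321 (PermContains.of_lt_imp hf fun a b hab => ?_)
    fin_cases a <;> fin_cases b <;> first | exact absurd hab (by decide) | (simp; order)

theorem comp_succ_eq_succAbove (hπ : StrictMono (π ∘ Fin.succ)) :
    π ∘ Fin.succ = (π 0).succAbove := by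
  refine (hπ.range_inj (Fin.strictMono_succAbove _)).1 ?_
  rw [Set.range_comp, Fin.range_succ, Equiv.image_compl, Set.image_singleton,
    Fin.range_succAbove]

theorem strictMono_inv_cycleRange_comp_succ (c : Fin (n + 1)) :
    StrictMono (⇑(Fin.cycleRange c)⁻¹ ∘ Fin.succ) := by
  have : ⇑(Fin.cycleRange c)⁻¹ ∘ Fin.succ = c.succAbove := by
    funext j
    simp [Perm.inv_def]
  exact this ▸ Fin.strictMono_succAbove c

theorem strictMono_comp_succ_iff : StrictMono (π ∘ Fin.succ) ↔ (Fin.cycleRange (π 0))⁻¹ = π := by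
  refine ⟨fun hπ => ?_, fun h => h ▸ strictMono_inv_cycleRange_comp_succ _⟩
  ext1 j
  induction j using Fin.cases with
  | zero => simp [Perm.inv_def]
  | succ j => simpa [Perm.inv_def] using (congrFun (comp_succ_eq_succAbove hπ) j).symm

theorem permContains_finRotate_inv_iff {m : ℕ} (hπ : StrictMono (π ∘ Fin.succ)) :
    PermContains (finRotate (m + 2))⁻¹ π ↔ m + 1 ≤ (π 0 : ℕ) := by
  constructor
  · rintro ⟨f, hf, hτ⟩
    -- `π` increases after position `0`, so the largest entry of the pattern must sit there,
    -- and the other `m + 1` entries are distinct values below `π 0`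
    have hf0 : f 0 = 0 := by
      by_contra h
      refine (lt_of_strictMono_comp_succ hπ h (hf (Fin.succ_pos 0))).asymm
        ((hτ (Fin.succ 0) 0).1 ?_)
      rw [finRotate_inv_apply_zero, finRotate_inv_apply_succ]
      exact Fin.castSucc_lt_last 0
    have hlt (j : Fin (m + 1)) : π (f j.succ) < π 0 := by
      refine hf0 ▸ (hτ j.succ 0).1 ?_
      rw [finRotate_inv_apply_zero, finRotate_inv_apply_succ]
      exact Fin.castSucc_lt_last j
    have hinj : Function.Injective (π ∘ f ∘ Fin.succ) :=
      π.injective.comp (hf.injective.comp (Fin.succ_injective _))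
    have hcard := Finset.card_le_card (s := Finset.univ.image (π ∘ f ∘ Fin.succ))
      (t := Finset.Iio (π 0)) (by simpa [Finset.subset_iff] using hlt)
    simpa [Finset.card_image_of_injective _ hinj] using hcard
  · intro hc
    have hmN : m + 2 ≤ n + 1 := by omega
    refine PermContains.of_lt_imp (Fin.strictMono_castLE hmN) fun a b hab => ?_
    induction a using Fin.cases with
    | zero =>
      rw [finRotate_inv_apply_zero] at hab
      exact absurd hab (not_lt.2 (Fin.le_last _))
    | succ i =>
      induction b using Fin.cases with
      | zero =>
        have hi : (Fin.castLE (by omega) i : Fin n).castSucc < π 0 := by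
          rw [Fin.lt_def]
          simp only [Fin.val_castSucc, Fin.val_castLE]
          omega
        calc π (Fin.castLE hmN i.succ) = (π 0).succAbove (Fin.castLE (by omega) i) :=
              congrFun (comp_succ_eq_succAbove hπ) (Fin.castLE (by omega) i)
          _ = (Fin.castLE _ i).castSucc := Fin.succAbove_of_castSucc_lt _ _ hi
          _ < π 0 := hi
          _ = π (Fin.castLE hmN 0) := by simp
      | succ j =>
        rw [finRotate_inv_apply_succ, finRotate_inv_apply_succ,
          Fin.castSucc_lt_castSucc_iff] at hab
        exact lt_of_strictMono_comp_succ hπ (by simp)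
          (Fin.strictMono_castLE hmN (Fin.succ_lt_succ_iff.2 hab))

theorem mem_avoidSet_132_231_321_finRotate_inv_iff {m : ℕ} :
    π ∈ avoidSet (n + 1) ({⟨3, p132⟩, ⟨3, p231⟩, ⟨3, p321⟩, ⟨m + 2, (finRotate (m + 2))⁻¹⟩} :
      Set (Σ k : ℕ, Equiv.Perm (Fin k))) ↔ StrictMono (π ∘ Fin.succ) ∧ (π 0 : ℕ) ≤ m := by
  simp only [avoidSet, Set.mem_ofPred_eq, Set.forall_mem_insert, Set.mem_singleton_iff,
    forall_eq]
  constructor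
  · rintro ⟨h132, h231, h321, hσ⟩
    have hπ := strictMono_comp_succ_of_avoids h132 h231 h321
    exact ⟨hπ, by rw [permContains_finRotate_inv_iff hπ] at hσ; omega⟩
  · rintro ⟨hπ, hc⟩
    have h3 {τ : Perm (Fin 3)} (hτ : τ 2 < τ 1) : ¬ PermContains τ π :=
      not_permContains_of_strictMono_comp_succ hπ (i := 0) (by decide) (by decide) hτ
    exact ⟨h3 (by decide), h3 (by decide), h3 (by decide),
      by rw [permContains_finRotate_inv_iff hπ]; omega⟩

end TailIncreasing

theorem avoidSet_132_231_321_finRotate_inv_eq_range {m n : ℕ} (h : m + 1 ≤ n + 1) :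
    avoidSet (n + 1) ({⟨3, p132⟩, ⟨3, p231⟩, ⟨3, p321⟩, ⟨m + 2, (finRotate (m + 2))⁻¹⟩} :
      Set (Σ k : ℕ, Equiv.Perm (Fin k))) =
      Set.range fun c : Fin (m + 1) => (Fin.cycleRange (Fin.castLE h c))⁻¹ := by
  ext π
  rw [mem_avoidSet_132_231_321_finRotate_inv_iff, Set.mem_range]
  constructor
  · rintro ⟨hπ, hc⟩
    exact ⟨⟨π 0, by omega⟩, strictMono_comp_succ_iff.1 hπ⟩
  · rintro ⟨c, rfl⟩
    refine ⟨strictMono_inv_cycleRange_comp_succ _, ?_⟩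
    simp only [inv_def, Fin.cycleRange_symm_zero, Fin.val_castLE]
    omega

end Equiv.Perm

/-- The permutation `k 1 2 … (k-1)` in one-line notation is the inverse of the
rotation `2 3 … k 1`. -/
theorem closure_avoid_gives_symm_of_pred (k : ℕ) (hk : 2 ≤ k) (n : ℕ) (hn : k ≤ n) :
    Nonempty (Subgroup.closure (avoidSet n
        ({⟨3, p132⟩, ⟨3, p231⟩, ⟨3, p321⟩, ⟨k, (finRotate k)⁻¹⟩} :
          Set (Σ k : ℕ, Equiv.Perm (Fin k)))) ≃* Equiv.Perm (Fin (k - 1))) := by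
  obtain ⟨m, rfl⟩ : ∃ m, k = m + 2 := ⟨k - 2, by omega⟩
  obtain ⟨N, rfl⟩ : ∃ N, n = N + 1 := ⟨n - 1, by omega⟩
  have hmN : m + 1 ≤ N + 1 := by omega
  rw [Perm.avoidSet_132_231_321_finRotate_inv_eq_range hmN,
    Perm.closure_range_inv_cycleRange_castLE]
  exact ⟨(MonoidHom.ofInjective (Perm.viaEmbeddingHom_injective _)).symm⟩
end

section
/- Let T be a set of permutation patterns of arbitrary lengths and let m ≥ 1. Suppose there exists n_0 ∈ ℕ such that for every n ≥ n_0 the group ⟨S_n(T)⟩ is isomorphic to the alternating group A_m. Then m ≤ 2 (equivalently, A_m is the trivial group). -/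
/-!
If `m ≥ 3`, then `A_m` is generated by 3-cycles and so has no nontrivial homomorphism to `ℤˣ`;
hence every `T`-avoider of length at least `n₀` is even, while `A_m ≠ 1` provides an avoider
`σ ≠ 1` of length `n₀ + 2`. Every pattern of an avoider is an avoider, so all patterns of `σ` of
length `n₀`, `n₀ + 1` and `n₀ + 2` are even. The sign of the pattern of `σ` on a set `S` of
positions is the product of `±1` over the pairs in `S`, with `-1` on the inverted pairs; deleting
one and then two positions shows by inclusion–exclusion that no pair is inverted, so `σ = 1`.
-/

open Equiv Finset

section PairProd

variable {α β M : Type*} [DecidableEq α] [CommMonoid M]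

def pairProd (w : Sym2 α → M) (S : Finset α) : M :=
  ∏ z ∈ S.sym2 with ¬ z.IsDiag, w z

theorem pairProd_erase (w : Sym2 α → M) {S : Finset α} {c : α} (hc : c ∈ S) :
    pairProd w S = (∏ x ∈ S.erase c, w s(c, x)) * pairProd w (S.erase c) := by
  have hS : S = (S.erase c).cons c (notMem_erase c S) := by simp [insert_erase hc]
  conv_lhs => rw [pairProd, hS, sym2_cons, filter_disjUnion, prod_disjUnion, filter_map,
    prod_map, filter_cons, if_neg (by simp)]
  congr 1
  refine prod_congr (filter_true_of_mem fun x hx => ?_) fun _ _ => rfl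
  simp only [Function.comp_apply, Sym2.mkEmbedding_apply, Sym2.mk_isDiag_iff]
  exact (ne_of_mem_erase hx).symm

theorem pairProd_image [DecidableEq β] (w : Sym2 β → M) {f : α → β}
    (hf : Function.Injective f) (S : Finset α) :
    pairProd w (S.image f) = pairProd (w ∘ Sym2.map f) S := by
  rw [pairProd, sym2_image, filter_image, prod_image fun _ _ _ _ h => Sym2.map.injective hf h]
  simp only [Function.comp_def, Sym2.isDiag_map hf]
  rfl

theorem apply_eq_one_of_pairProd_eq_one (w : Sym2 α → M) {U : Finset α}
    (h : ∀ S ⊆ U, #U ≤ #S + 2 → pairProd w S = 1) {c d : α} (hc : c ∈ U) (hd : d ∈ U)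
    (hcd : c ≠ d) : w s(c, d) = 1 := by
  have hstar : ∀ S ⊆ U, #U ≤ #S + 1 → ∀ x ∈ S, ∏ y ∈ S.erase x, w s(x, y) = 1 := by
    intro S hS hcard x hx
    have hsplit := pairProd_erase w hx
    rw [h S hS (by omega), h (S.erase x) ((erase_subset x S).trans hS)
      (by rw [card_erase_of_mem hx]; omega), mul_one] at hsplit
    exact hsplit.symm
  have hU := hstar U subset_rfl (by omega) d hd
  have hUc := hstar (U.erase c) (erase_subset c U) (by rw [card_erase_of_mem hc]; omega) d
    (mem_erase.2 ⟨hcd.symm, hd⟩)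
  rwa [← mul_prod_erase (U.erase d) _ (mem_erase.2 ⟨hcd, hc⟩), erase_right_comm, hUc, mul_one,
    Sym2.eq_swap] at hU

end PairProd

section InversionSign

variable {α : Type*} [LinearOrder α]

def inversionSign (σ : Perm α) : Sym2 α → ℤˣ :=
  Sym2.lift ⟨fun a b => if (a < b ↔ σ a < σ b) then 1 else -1, fun a b => by
    have := σ.injective.eq_iff (a := a) (b := b)
    grind⟩

theorem inversionSign_mk (σ : Perm α) {a b : α} (hab : a < b) :
    inversionSign σ s(a, b) = if σ a < σ b then 1 else -1 := by
  simp [inversionSign, hab]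

theorem sign_eq_pairProd_inversionSign {n : ℕ} (σ : Perm (Fin n)) :
    σ.sign = pairProd (inversionSign σ) univ := by
  apply Additive.ofMul.injective
  rw [pairProd, ofMul_prod, sum_sym2_filter_not_isDiag, σ.sign_eq_prod_prod_Ioi, ofMul_prod]
  have hpairs : univ.offDiag.filter (fun p : Fin n × Fin n => p.1 < p.2) =
      univ.filter (fun p : Fin n × Fin n => p.1 < p.2) := by
    ext p
    simpa using fun h => h.ne
  rw [hpairs, sum_filter, Fintype.sum_prod_type]
  refine sum_congr rfl fun i _ => ?_
  rw [← filter_lt_eq_Ioi, ofMul_prod, sum_filter]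
  refine sum_congr rfl fun j _ => ?_
  by_cases hij : i < j
  · simp [hij, inversionSign_mk σ hij]
  · simp [hij]

theorem sign_eq_pairProd_inversionSign_of_lt_iff {k n : ℕ} {σ : Perm (Fin n)} {ρ : Perm (Fin k)}
    {f : Fin k → Fin n} (hf : StrictMono f) (h : ∀ a b, ρ a < ρ b ↔ σ (f a) < σ (f b)) :
    ρ.sign = pairProd (inversionSign σ) (univ.image f) := by
  rw [sign_eq_pairProd_inversionSign, pairProd_image _ hf.injective]
  congr 1
  ext z
  induction z using Sym2.ind with
  | h a b => simp [inversionSign, h, hf.lt_iff_lt]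

theorem eq_one_of_inversionSign_eq_one {n : ℕ} {σ : Perm (Fin n)}
    (h : ∀ a b, a < b → inversionSign σ s(a, b) = 1) : σ = 1 := by
  refine σ.monotone_iff.1 (StrictMono.monotone fun a b hab => ?_)
  have := h a b hab
  rw [inversionSign_mk σ hab] at this
  by_contra hba
  simp [hba] at this

end InversionSign

theorem exists_perm_lt_iff_lt {α : Type*} [LinearOrder α] {k : ℕ} {g : Fin k → α}
    (hg : Function.Injective g) : ∃ ρ : Perm (Fin k), ∀ a b, ρ a < ρ b ↔ g a < g b := by
  have hsorted : StrictMono (g ∘ Tuple.sort g) :=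
    (Tuple.monotone_sort g).strictMono_of_injective (hg.comp (Tuple.sort g).injective)
  refine ⟨(Tuple.sort g)⁻¹, fun a b => ?_⟩
  simpa using (hsorted.lt_iff_lt (a := (Tuple.sort g)⁻¹ a) (b := (Tuple.sort g)⁻¹ b)).symm

theorem PermContains.trans {i j n : ℕ} {τ : Perm (Fin i)} {ρ : Perm (Fin j)}
    {σ : Perm (Fin n)} (hτ : PermContains τ ρ) (hρ : PermContains ρ σ) : PermContains τ σ := by
  obtain ⟨f, hf, hτf⟩ := hτ
  obtain ⟨g, hg, hρg⟩ := hρ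
  exact ⟨g ∘ f, hg.comp hf, fun a b => (hτf a b).trans (hρg (f a) (f b))⟩

theorem mem_avoidSet_of_permContains {j n : ℕ} {T : Set (Σ k : ℕ, Perm (Fin k))}
    {ρ : Perm (Fin j)} {σ : Perm (Fin n)} (hρ : PermContains ρ σ) (hσ : σ ∈ avoidSet n T) :
    ρ ∈ avoidSet j T :=
  fun τ hτ hτρ => hσ τ hτ (hτρ.trans hρ)

theorem pairProd_inversionSign_eq_one_of_mem_avoidSet {T : Set (Σ k : ℕ, Perm (Fin k))} {n₀ : ℕ}
    (heven : ∀ n ≥ n₀, ∀ π ∈ avoidSet n T, π.sign = 1) {n : ℕ} {σ : Perm (Fin n)}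
    (hσ : σ ∈ avoidSet n T) {S : Finset (Fin n)} (hS : n₀ ≤ #S) :
    pairProd (inversionSign σ) S = 1 := by
  let f := S.orderEmbOfFin rfl
  obtain ⟨ρ, hρ⟩ := exists_perm_lt_iff_lt (σ.injective.comp f.injective)
  have hρT : ρ ∈ avoidSet #S T := mem_avoidSet_of_permContains ⟨f, f.strictMono, hρ⟩ hσ
  rw [← image_orderEmbOfFin_univ S rfl,
    ← sign_eq_pairProd_inversionSign_of_lt_iff f.strictMono hρ]
  exact heven _ hS ρ hρT

theorem monoidHom_alternatingGroup_intUnits_eq_one {α : Type*} [Fintype α] [DecidableEq α]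
    (φ : alternatingGroup α →* ℤˣ) : φ = 1 := by
  refine MonoidHom.eq_of_eqOn_dense alternatingGroup.closure_isThreeCycles_eq_top fun g hg => ?_
  have hg3 : g ^ 3 = 1 := Subtype.ext (by simpa [hg.orderOf] using pow_orderOf_eq_one (g : Perm α))
  have hφ3 : φ g ^ 3 = 1 := by rw [← map_pow, hg3, map_one]
  rwa [pow_succ, Int.units_sq, one_mul] at hφ3

theorem sign_eq_one_of_mulEquiv_alternatingGroup {α β : Type*} [Fintype α] [DecidableEq α]
    [Fintype β] [DecidableEq β] {H : Subgroup (Perm α)} (e : H ≃* alternatingGroup β) {x : Perm α}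
    (hx : x ∈ H) : x.sign = 1 := by
  simpa using DFunLike.congr_fun (monoidHom_alternatingGroup_intUnits_eq_one
    ((Perm.sign.comp H.subtype).comp e.symm.toMonoidHom)) (e ⟨x, hx⟩)

theorem alternating_eventually_constant_group_general (T : Set (Σ k : ℕ, Equiv.Perm (Fin k)))
    (m : ℕ)
    (h : ∃ n₀ : ℕ, ∀ n : ℕ, n₀ ≤ n →
      Nonempty (Subgroup.closure (avoidSet n T) ≃* alternatingGroup (Fin m))) :
    m ≤ 2 := by
  by_contra! hm
  obtain ⟨n₀, h⟩ := h
  have heven : ∀ n ≥ n₀, ∀ π ∈ avoidSet n T, π.sign = 1 := fun n hn π hπ =>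
    (h n hn).elim fun e => sign_eq_one_of_mulEquiv_alternatingGroup e (Subgroup.subset_closure hπ)
  obtain ⟨e⟩ := h (n₀ + 2) (by omega)
  have : Nontrivial (alternatingGroup (Fin m)) :=
    alternatingGroup.nontrivial_of_three_le_card (by rwa [Nat.card_fin])
  have hne : Subgroup.closure (avoidSet (n₀ + 2) T) ≠ ⊥ :=
    (Subgroup.nontrivial_iff_ne_bot _).1 e.toEquiv.nontrivial
  obtain ⟨σ, hσ, hσ1⟩ := Set.not_subset.1 (mt Subgroup.closure_eq_bot_iff.2 hne)
  refine hσ1 (eq_one_of_inversionSign_eq_one fun a b hab => ?_)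
  refine apply_eq_one_of_pairProd_eq_one _ (U := univ) (fun S _ hS =>
    pairProd_inversionSign_eq_one_of_mem_avoidSet heven hσ ?_) (mem_univ a) (mem_univ b) hab.ne
  simpa using hS

theorem alternating_eventually_constant_group (T : Set (Σ k : ℕ, Equiv.Perm (Fin k)))
    (m : ℕ) (hm : 1 ≤ m)
    (h : ∃ n₀ : ℕ, ∀ n : ℕ, n₀ ≤ n →
      Nonempty (Subgroup.closure (avoidSet n T) ≃* alternatingGroup (Fin m))) :
    m ≤ 2 :=
  alternating_eventually_constant_group_general T m h
end

section
/- For every n ≥ 1, the subgroup ⟨S_n({132, 213, 321})⟩ of S_n is isomorphic to the cyclic group ℤ_n of order n; indeed, S_n({132, 213, 321}) consists exactly of the powers of the n-cycle (1,2,…,n). -/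
/-- The pattern 213. -/
def p213 : Equiv.Perm (Fin 3) := Equiv.swap 0 1
/-!
Avoiding 132, 213 and 321 means that at any three positions `x < y < z` the values appear in one
of the cyclic orders 123, 231, 312, i.e. `sbtw (π x) (π y) (π z)` in the circular order of
`Fin n`. For adjacent positions `i, i + 1` every other value then lies on the circular arc from
`π (i + 1)` back to `π i`, so nothing lies strictly between them and `π (i + 1) = π i + 1`;
hence `π` is a power of the rotation. Conversely the rotation preserves the circular order.
The avoiders thus generate the cyclic group `⟨finRotate n⟩`, of order `n`.
-/

open Equiv

theorem permContains_iff_exists_strictMono {k n : ℕ} {τ : Perm (Fin k)} {π : Perm (Fin n)} :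
    PermContains τ π ↔ ∃ f : Fin k → Fin n, StrictMono f ∧ StrictMono (π ∘ f ∘ τ.symm) := by
  refine exists_congr fun f => and_congr_right fun _ => ⟨fun h a b _ => ?_, fun h a b => ?_⟩
  · exact (h _ _).1 (by simpa using ‹a < b›)
  · simpa using (h.lt_iff_lt (a := τ a) (b := τ b)).symm

theorem strictMono_fin_three_iff {α : Type*} [Preorder α] {g : Fin 3 → α} :
    StrictMono g ↔ g 0 < g 1 ∧ g 1 < g 2 := by
  simp [Fin.strictMono_iff_lt_succ, Fin.forall_fin_succ]

theorem permContains_fin_three_iff {n : ℕ} {τ : Perm (Fin 3)} {π : Perm (Fin n)} :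
    PermContains τ π ↔ ∃ x y z, x < y ∧ y < z ∧ StrictMono (π ∘ ![x, y, z] ∘ τ.symm) := by
  rw [permContains_iff_exists_strictMono]
  constructor
  · rintro ⟨f, hf, h⟩
    refine ⟨f 0, f 1, f 2, hf (by decide), hf (by decide), ?_⟩
    convert h
    ext i
    fin_cases i <;> rfl
  · rintro ⟨x, y, z, hxy, hyz, h⟩
    exact ⟨_, strictMono_fin_three_iff.2 ⟨hxy, hyz⟩, h⟩

theorem permContains_p132_iff {n : ℕ} {π : Perm (Fin n)} :
    PermContains p132 π ↔ ∃ x y z, x < y ∧ y < z ∧ π x < π z ∧ π z < π y := by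
  simp [permContains_fin_three_iff, strictMono_fin_three_iff, p132, swap_apply_of_ne_of_ne]

theorem permContains_p213_iff {n : ℕ} {π : Perm (Fin n)} :
    PermContains p213 π ↔ ∃ x y z, x < y ∧ y < z ∧ π y < π x ∧ π x < π z := by
  simp [permContains_fin_three_iff, strictMono_fin_three_iff, p213]

theorem permContains_p321_iff {n : ℕ} {π : Perm (Fin n)} :
    PermContains p321 π ↔ ∃ x y z, x < y ∧ y < z ∧ π z < π y ∧ π y < π x := by
  simp [permContains_fin_three_iff, strictMono_fin_three_iff, p321, swap_apply_of_ne_of_ne]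

theorem mem_avoidSet_iff_sbtw {n : ℕ} {π : Perm (Fin n)} :
    π ∈ avoidSet n ({⟨3, p132⟩, ⟨3, p213⟩, ⟨3, p321⟩} : Set (Σ k : ℕ, Perm (Fin k))) ↔
      ∀ x y z, x < y → y < z → sbtw (π x) (π y) (π z) := by
  simp only [avoidSet, Set.mem_ofPred_eq, Set.forall_mem_insert, Set.mem_singleton_iff, forall_eq,
    permContains_p132_iff, permContains_p213_iff, permContains_p321_iff, not_exists, not_and]
  refine ⟨fun ⟨h132, h213, h321⟩ x y z hxy hyz => ?_, fun h => ⟨?_, ?_, ?_⟩⟩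
  · have hxy' := π.injective.ne hxy.ne
    have hyz' := π.injective.ne hyz.ne
    have hxz' := π.injective.ne (hxy.trans hyz).ne
    have := h132 x y z hxy hyz
    have := h213 x y z hxy hyz
    have := h321 x y z hxy hyz
    rw [Fin.sbtw_iff]
    omega
  all_goals
    intro x y z hxy hyz
    have := Fin.sbtw_iff.1 (h x y z hxy hyz)
    omega

namespace Fin

variable {m : ℕ}

theorem not_sbtw_add_one (a b : Fin (m + 1)) : ¬ sbtw a b (a + 1) := by
  simp only [Fin.sbtw_iff, Fin.lt_def, Fin.val_add_one, Fin.ext_iff, Fin.val_last]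
  split_ifs <;> omega

theorem sbtw_add_one {a b c : Fin (m + 1)} (h : sbtw a b c) : sbtw (a + 1) (b + 1) (c + 1) := by
  simp only [Fin.sbtw_iff, Fin.lt_def, Fin.val_add_one, Fin.ext_iff, Fin.val_last] at h ⊢
  split_ifs <;> omega

end Fin

open Fin.NatCast in
theorem finRotate_pow_apply {m : ℕ} (j : ℕ) (k : Fin (m + 1)) :
    (finRotate (m + 1) ^ j) k = k + j := by
  induction j with
  | zero => simp
  | succ j ih =>
    rw [pow_succ', Perm.mul_apply, ih, finRotate_apply, Nat.cast_succ, add_assoc]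

theorem orderOf_finRotate_succ (m : ℕ) : orderOf (finRotate (m + 1)) = m + 1 := by
  rw [orderOf_eq_iff m.succ_pos]
  refine ⟨Equiv.ext fun k => by simp [finRotate_pow_apply], fun k hk hk0 h => ?_⟩
  have h0 := congr($h 0)
  rw [finRotate_pow_apply, zero_add, Perm.one_apply, Fin.natCast_eq_zero] at h0
  exact hk0.ne' (Nat.eq_zero_of_dvd_of_lt h0 hk)

theorem sbtw_finRotate_pow {m : ℕ} {x y z : Fin (m + 1)} (h : sbtw x y z) (j : ℕ) :
    sbtw ((finRotate (m + 1) ^ j) x) ((finRotate (m + 1) ^ j) y) ((finRotate (m + 1) ^ j) z) := by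
  induction j with
  | zero => exact h
  | succ j ih => simpa only [pow_succ', Perm.mul_apply, finRotate_apply] using Fin.sbtw_add_one ih

theorem apply_succ_eq_apply_castSucc_add_one {m : ℕ} {π : Perm (Fin (m + 1))}
    (hπ : ∀ x y z, x < y → y < z → sbtw (π x) (π y) (π z)) (i : Fin m) :
    π i.succ = π i.castSucc + 1 := by
  by_contra hne
  set w := π.symm (π i.castSucc + 1)
  have hw : π w = π i.castSucc + 1 := π.apply_symm_apply _
  have hw_succ : w ≠ i.succ := fun h => hne (h ▸ hw)
  have hw_castSucc : w ≠ i.castSucc := by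
    intro h
    rw [h, left_eq_add, Fin.one_eq_zero_iff] at hw
    exact i.pos.ne' (Nat.add_right_cancel hw)
  have hsbtw : sbtw (π i.castSucc) (π i.succ) (π w) := by
    rcases hw_castSucc.lt_or_gt with hlt | hgt
    · exact sbtw_cyclic_left (hπ _ _ _ hlt i.castSucc_lt_succ)
    · exact hπ _ _ _ i.castSucc_lt_succ ((Fin.castSucc_lt_iff_succ_le.1 hgt).lt_of_ne hw_succ.symm)
  exact Fin.not_sbtw_add_one _ _ (hw ▸ hsbtw)

theorem eq_finRotate_pow_of_sbtw {m : ℕ} {π : Perm (Fin (m + 1))}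
    (hπ : ∀ x y z, x < y → y < z → sbtw (π x) (π y) (π z)) :
    π = finRotate (m + 1) ^ (π 0 : ℕ) := by
  have h : ∀ k, π k = k + π 0 := by
    intro k
    induction k using Fin.induction with
    | zero => simp
    | succ i ih =>
      rw [apply_succ_eq_apply_castSucc_add_one hπ, ih, ← Fin.coeSucc_eq_succ, add_right_comm]
  ext k
  rw [h, finRotate_pow_apply, Fin.cast_val_eq_self]

theorem Subgroup.closure_setOf_pow_eq_zpowers {G : Type*} [Group G] (g : G) :
    Subgroup.closure {x | ∃ j : ℕ, x = g ^ j} = Subgroup.zpowers g := by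
  refine le_antisymm ?_ ?_
  · rw [Subgroup.closure_le]
    rintro x ⟨j, rfl⟩
    exact Subgroup.pow_mem _ (Subgroup.mem_zpowers _) j
  · rw [Subgroup.zpowers_le]
    exact Subgroup.subset_closure ⟨1, (pow_one _).symm⟩

theorem avoid_132_213_321_cyclic (n : ℕ) (hn : 1 ≤ n) :
    avoidSet n ({⟨3, p132⟩, ⟨3, p213⟩, ⟨3, p321⟩} : Set (Σ k : ℕ, Equiv.Perm (Fin k))) =
      {π : Equiv.Perm (Fin n) | ∃ j : ℕ, π = (finRotate n) ^ j} ∧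
    Nonempty (Subgroup.closure
      (avoidSet n ({⟨3, p132⟩, ⟨3, p213⟩, ⟨3, p321⟩} : Set (Σ k : ℕ, Equiv.Perm (Fin k)))) ≃*
        Multiplicative (ZMod n)) := by
  obtain ⟨m, rfl⟩ := Nat.exists_eq_add_of_le' hn
  have hset : avoidSet (m + 1) ({⟨3, p132⟩, ⟨3, p213⟩, ⟨3, p321⟩} : Set (Σ k : ℕ, Perm (Fin k))) =
      {π | ∃ j : ℕ, π = finRotate (m + 1) ^ j} := by
    ext π
    rw [mem_avoidSet_iff_sbtw]
    refine ⟨fun hπ => ⟨_, eq_finRotate_pow_of_sbtw hπ⟩, ?_⟩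
    rintro ⟨j, rfl⟩ x y z hxy hyz
    exact sbtw_finRotate_pow (Or.inl ⟨hxy, hyz⟩) j
  rw [hset, Subgroup.closure_setOf_pow_eq_zpowers]
  refine ⟨rfl, ⟨mulEquivOfCyclicCardEq ?_⟩⟩
  rw [Nat.card_zpowers, orderOf_finRotate_succ,
    Nat.card_congr Multiplicative.toAdd, Nat.card_zmod]
end

section
/- For every n ≥ 3, the subgroup ⟨S_n({123, 231, 312})⟩ of S_n is isomorphic to the dihedral group D_n of order 2n. -/
/-- The pattern 312. -/
def p312 : Equiv.Perm (Fin 3) := (finRotate 3)⁻¹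

/-! Let `π` avoid `123`, `231` and `312`, and let `i`, `i + 1` be adjacent positions. Every other
position lies on one side of both, so the patterns force: if `π i < π (i + 1)`, every other value
lies between them, whence `π i = 0` and `π (i + 1) = n - 1`; if `π i > π (i + 1)`, no value lies
between them. Either way `π (i + 1) = π i - 1` in `ℤ/n`, so `π` is the reflection `x ↦ π 0 - x`.
Conversely each reflection `x ↦ j - x`, being two decreasing runs with the second above the
first, avoids all three patterns. The `n` reflections generate the image of the natural action of
`D_n` on `ℤ/n`, which is faithful once `2 ≠ 0` in `ℤ/n`. -/

section Patterns

variable {k n : ℕ} {τ : Equiv.Perm (Fin k)} {π : Equiv.Perm (Fin n)}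

theorem permContains_iff_strictMono :
    PermContains τ π ↔ ∃ f : Fin k → Fin n, StrictMono f ∧ StrictMono (π ∘ f ∘ τ.symm) := by
  refine exists_congr fun f => and_congr_right fun _ => ⟨fun h a b hab => ?_, fun h a b => ?_⟩
  · simpa using (h (τ.symm a) (τ.symm b)).1 (by simpa using hab)
  · simpa using (h.lt_iff_lt (a := τ a) (b := τ b)).symm

theorem permContains_three_iff {τ : Equiv.Perm (Fin 3)} :
    PermContains τ π ↔ ∃ x y z, x < y ∧ y < z ∧ StrictMono (π ∘ ![x, y, z] ∘ τ.symm) := by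
  rw [permContains_iff_strictMono]
  constructor
  · rintro ⟨f, hf, hπf⟩
    refine ⟨f 0, f 1, f 2, hf (by decide), hf (by decide), ?_⟩
    convert hπf
    ext i; fin_cases i <;> rfl
  · rintro ⟨x, y, z, hxy, hyz, h⟩
    exact ⟨_, Fin.strictMono_iff_lt_succ.2 (by simp [Fin.forall_fin_succ, hxy, hyz]), h⟩

theorem permContains_123_iff :
    PermContains (1 : Equiv.Perm (Fin 3)) π ↔ ∃ x y z, x < y ∧ y < z ∧ π x < π y ∧ π y < π z := by
  have h : ⇑(1 : Equiv.Perm (Fin 3)).symm = ![0, 1, 2] := by decide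
  simp [permContains_three_iff, h, Fin.strictMono_iff_lt_succ, Fin.forall_fin_succ]

theorem permContains_231_iff :
    PermContains p231 π ↔ ∃ x y z, x < y ∧ y < z ∧ π z < π x ∧ π x < π y := by
  have h : ⇑p231.symm = ![2, 0, 1] := by decide
  simp [permContains_three_iff, h, Fin.strictMono_iff_lt_succ, Fin.forall_fin_succ]

theorem permContains_312_iff :
    PermContains p312 π ↔ ∃ x y z, x < y ∧ y < z ∧ π y < π z ∧ π z < π x := by
  have h : ⇑p312.symm = ![1, 2, 0] := by decide
  simp [permContains_three_iff, h, Fin.strictMono_iff_lt_succ, Fin.forall_fin_succ]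

end Patterns

theorem mem_avoidSet_123_231_312_iff {n : ℕ} {π : Equiv.Perm (Fin n)} :
    π ∈ avoidSet n {⟨3, (1 : Equiv.Perm (Fin 3))⟩, ⟨3, p231⟩, ⟨3, p312⟩} ↔
      ¬ PermContains (1 : Equiv.Perm (Fin 3)) π ∧ ¬ PermContains p231 π ∧
        ¬ PermContains p312 π := by
  simp [avoidSet]

theorem Fin.sub_lt_sub_left_iff_of_lt {n : ℕ} [NeZero n] {j x y : Fin n} (hxy : x < y) :
    j - x < j - y ↔ x ≤ j ∧ j < y := by
  have val_sub (a : Fin n) :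
      ((j - a : Fin n) : ℕ) = if (a : ℕ) ≤ j then (j : ℕ) - a else n + j - a := by
    split_ifs with h
    · exact Fin.sub_val_of_le h
    · exact Fin.coe_sub_iff_lt.2 (not_le.1 h)
  rw [Fin.lt_def] at hxy
  rw [Fin.lt_def, val_sub, val_sub, Fin.le_def, Fin.lt_def]
  have := y.isLt
  split_ifs <;> omega

theorem subLeft_mem_avoidSet_123_231_312 {n : ℕ} [NeZero n] (j : Fin n) :
    Equiv.subLeft j ∈ avoidSet n {⟨3, (1 : Equiv.Perm (Fin 3))⟩, ⟨3, p231⟩, ⟨3, p312⟩} := by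
  simp only [mem_avoidSet_123_231_312_iff, permContains_123_iff, permContains_231_iff,
    permContains_312_iff, Equiv.subLeft_apply, not_exists, not_and]
  refine ⟨fun x y z hxy hyz h1 h2 => ?_, fun x y z hxy hyz h1 h2 => ?_,
    fun x y z hxy hyz h1 h2 => ?_⟩
  · obtain ⟨-, hjy⟩ := (Fin.sub_lt_sub_left_iff_of_lt hxy).1 h1
    obtain ⟨hyj, -⟩ := (Fin.sub_lt_sub_left_iff_of_lt hyz).1 h2
    exact hjy.not_ge hyj
  · obtain ⟨hxj, hjy⟩ := (Fin.sub_lt_sub_left_iff_of_lt hxy).1 h2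
    exact h1.not_gt ((Fin.sub_lt_sub_left_iff_of_lt (hxy.trans hyz)).2 ⟨hxj, hjy.trans hyz⟩)
  · obtain ⟨hyj, hjz⟩ := (Fin.sub_lt_sub_left_iff_of_lt hyz).1 h1
    exact h2.not_gt ((Fin.sub_lt_sub_left_iff_of_lt (hxy.trans hyz)).2 ⟨hxy.le.trans hyj, hjz⟩)

section Avoiders

variable {m : ℕ} {π : Equiv.Perm (Fin (m + 1))}

theorem not_lt_lt_of_avoids (h123 : ¬ PermContains (1 : Equiv.Perm (Fin 3)) π)
    (h231 : ¬ PermContains p231 π) (h312 : ¬ PermContains p312 π)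
    (i : Fin m) (w : Fin (m + 1)) :
    ¬ (π w < π i.castSucc ∧ π i.castSucc < π i.succ) ∧
      ¬ (π i.castSucc < π i.succ ∧ π i.succ < π w) ∧
        ¬ (π i.succ < π w ∧ π w < π i.castSucc) := by
  rw [permContains_123_iff] at h123
  rw [permContains_231_iff] at h231
  rw [permContains_312_iff] at h312
  have hi : i.castSucc < i.succ := Fin.castSucc_lt_succ
  obtain hw | rfl | rfl | hw : w < i.castSucc ∨ w = i.castSucc ∨ w = i.succ ∨ i.succ < w := by
    rw [Fin.lt_def, Fin.lt_def, Fin.ext_iff, Fin.ext_iff, Fin.val_succ, Fin.val_castSucc]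
    omega
  · exact ⟨fun h => h123 ⟨_, _, _, hw, hi, h⟩, fun h => h312 ⟨_, _, _, hw, hi, h⟩,
      fun h => h231 ⟨_, _, _, hw, hi, h⟩⟩
  · exact ⟨fun h => lt_irrefl _ h.1, fun h => lt_asymm h.1 h.2, fun h => lt_irrefl _ h.2⟩
  · exact ⟨fun h => lt_asymm h.1 h.2, fun h => lt_irrefl _ h.2, fun h => lt_irrefl _ h.1⟩
  · exact ⟨fun h => h231 ⟨_, _, _, hi, hw, h⟩, fun h => h123 ⟨_, _, _, hi, hw, h⟩,
      fun h => h312 ⟨_, _, _, hi, hw, h⟩⟩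

theorem apply_succ_eq_apply_castSucc_sub_one_of_avoids
    (h123 : ¬ PermContains (1 : Equiv.Perm (Fin 3)) π) (h231 : ¬ PermContains p231 π)
    (h312 : ¬ PermContains p312 π) (i : Fin m) :
    π i.succ = π i.castSucc - 1 := by
  have forbidden (v : Fin (m + 1)) := by
    simpa only [Equiv.apply_symm_apply] using not_lt_lt_of_avoids h123 h231 h312 i (π.symm v)
  apply eq_sub_of_add_eq
  rcases lt_or_gt_of_ne (π.injective.ne Fin.castSucc_lt_succ.ne) with hasc | hdesc
  · have hx : π i.castSucc = 0 := by
      by_contra h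
      exact (forbidden 0).1 ⟨Fin.pos_iff_ne_zero.2 h, hasc⟩
    have hy : π i.succ = Fin.last m := by
      by_contra h
      exact (forbidden (Fin.last m)).2.1 ⟨hasc, Fin.lt_last_iff_ne_last.2 h⟩
    rw [hx, hy, Fin.last_add_one]
  · refine (Fin.add_one_le_of_lt hdesc).antisymm (not_lt.1 fun h => ?_)
    exact (forbidden _).2.2 ⟨Fin.lt_add_one_iff.2 (hdesc.trans_le (Fin.le_last _)), h⟩

theorem eq_subLeft_of_avoids (h123 : ¬ PermContains (1 : Equiv.Perm (Fin 3)) π)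
    (h231 : ¬ PermContains p231 π) (h312 : ¬ PermContains p312 π) :
    π = Equiv.subLeft (π 0) := by
  ext1 x
  induction x using Fin.induction with
  | zero => simp
  | succ i ih =>
    rw [apply_succ_eq_apply_castSucc_sub_one_of_avoids h123 h231 h312, ih]
    simp only [Equiv.subLeft_apply, sub_sub, Fin.coeSucc_eq_succ]

end Avoiders

theorem avoidSet_123_231_312_eq_range_subLeft (m : ℕ) :
    avoidSet (m + 1) {⟨3, (1 : Equiv.Perm (Fin 3))⟩, ⟨3, p231⟩, ⟨3, p312⟩} =
      Set.range Equiv.subLeft := by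
  ext π
  refine ⟨fun hπ => ?_, ?_⟩
  · obtain ⟨h123, h231, h312⟩ := mem_avoidSet_123_231_312_iff.1 hπ
    exact ⟨π 0, (eq_subLeft_of_avoids h123 h231 h312).symm⟩
  · rintro ⟨j, rfl⟩
    exact subLeft_mem_avoidSet_123_231_312 j

namespace DihedralGroup

variable {n : ℕ}

def toPerm : DihedralGroup n →* Equiv.Perm (ZMod n) where
  toFun
    | r i => Equiv.subRight i
    | sr i => Equiv.subLeft i
  map_one' := Equiv.ext sub_zero
  map_mul' := by
    rintro (i | i) (j | j) <;> ext x <;>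
      simp only [r_mul_r, r_mul_sr, sr_mul_r, sr_mul_sr, Equiv.Perm.mul_apply,
        Equiv.subRight_apply, Equiv.subLeft_apply] <;> ring

theorem toPerm_injective (h2 : (2 : ZMod n) ≠ 0) : Function.Injective (toPerm (n := n)) := by
  rw [injective_iff_map_eq_one]
  rintro (i | i) h
  · have hi : (0 : ZMod n) - i = 0 := congr($h 0)
    rw [zero_sub, neg_eq_zero] at hi
    rw [hi, r_zero]
  · have h0 : i - 0 = 0 := congr($h 0)
    have h1 : i - 1 = 1 := congr($h 1)
    exact absurd (by linear_combination h0 - h1) h2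

theorem closure_range_sr : Subgroup.closure (Set.range (sr : ZMod n → DihedralGroup n)) = ⊤ := by
  refine eq_top_iff.2 fun g _ => ?_
  obtain i | i := g
  · rw [← sub_zero i, ← sr_mul_sr]
    exact mul_mem (Subgroup.subset_closure ⟨0, rfl⟩) (Subgroup.subset_closure ⟨i, rfl⟩)
  · exact Subgroup.subset_closure ⟨i, rfl⟩

theorem closure_range_subLeft :
    Subgroup.closure (Set.range (Equiv.subLeft : ZMod n → Equiv.Perm (ZMod n))) = toPerm.range := by
  rw [toPerm.range_eq_map, ← closure_range_sr, MonoidHom.map_closure, ← Set.range_comp]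
  rfl

noncomputable def closureRangeSubLeftEquiv (h2 : (2 : ZMod n) ≠ 0) :
    Subgroup.closure (Set.range (Equiv.subLeft : ZMod n → Equiv.Perm (ZMod n))) ≃*
      DihedralGroup n :=
  (MulEquiv.subgroupCongr closure_range_subLeft).trans
    (MonoidHom.ofInjective (toPerm_injective h2)).symm

end DihedralGroup

theorem ZMod.two_ne_zero_of_three_le {n : ℕ} (hn : 3 ≤ n) : (2 : ZMod n) ≠ 0 := by
  intro h
  have h2 : n ∣ 2 := (ZMod.natCast_eq_zero_iff 2 n).1 (by exact_mod_cast h)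
  have := Nat.le_of_dvd two_pos h2
  omega

theorem closure_avoid_123_231_312_dihedral (n : ℕ) (hn : 3 ≤ n) :
    Nonempty (Subgroup.closure
      (avoidSet n ({⟨3, (1 : Equiv.Perm (Fin 3))⟩, ⟨3, p231⟩, ⟨3, p312⟩} :
        Set (Σ k : ℕ, Equiv.Perm (Fin k)))) ≃* DihedralGroup n) := by
  obtain ⟨m, rfl⟩ : ∃ m, n = m + 1 := ⟨n - 1, by omega⟩
  rw [avoidSet_123_231_312_eq_range_subLeft]
  -- `ZMod (m + 1)` is `Fin (m + 1)` by definition, ring structure included.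
  exact ⟨DihedralGroup.closureRangeSubLeftEquiv (ZMod.two_ne_zero_of_three_le hn)⟩
end

section
/- Let T ⊆ S_3 with |T| = 3. Suppose that {123, 321} is not contained in T, that T ≠ {132, 213, 321}, and that T ≠ {123, 231, 312}. Then ⟨S_n(T)⟩ = S_n for every n. -/
def p123 : Equiv.Perm (Fin 3) := 1
/-!
The rotation `2 3 ⋯ n 1` (`finRotate`), its inverse, the adjacent transpositions and the
reversal `w₀ = Fin.revPerm` contain very few patterns of length three, which can be read off
their inversions: the rotation contains only `123` and `231`, its inverse only `123` and `312`,
an adjacent transposition only `123`, `132` and `213` (only `123` and `213` at the front, only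
`123` and `132` at the back), and `w₀` only `321`. Since `π` avoids `τ` iff `w₀π` avoids `w₀τ`,
when `321 ∉ T` the group `⟨S_n(T)⟩` contains `w₀` and therefore also `S_n(w₀T)`. A finite check
over the admissible `T` shows that `⟨S_n(T)⟩` then always contains either every adjacent
transposition, or a rotation together with one adjacent transposition; both generate `S_n`.
-/

open Equiv Finset

variable {k m n : ℕ}

theorem permContains_revPerm_mul_iff {τ : Perm (Fin k)} {π : Perm (Fin n)} :
    PermContains τ (Fin.revPerm * π) ↔ PermContains (Fin.revPerm * τ) π := by
  simp only [PermContains, Perm.mul_apply, Fin.revPerm_apply, Fin.rev_lt_rev]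
  exact exists_congr fun f => and_congr_right fun _ => forall_comm

theorem inversions_of_permContains_revPerm {τ : Perm (Fin k)}
    (h : PermContains τ (Fin.revPerm : Perm (Fin n))) : ∀ a b, a < b → τ b < τ a := by
  obtain ⟨f, hf, hτ⟩ := h
  intro a b hab
  simpa [hτ] using hf hab

theorem finRotate_lt_finRotate_iff {a b : Fin (m + 1)} (hab : a < b) :
    finRotate (m + 1) b < finRotate (m + 1) a ↔ b = Fin.last m := by
  have ha : a ≠ Fin.last m := (hab.trans_le (Fin.le_last b)).ne
  by_cases hb : b = Fin.last m
  · subst hb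
    refine iff_of_true ?_ rfl
    rw [finRotate_last, Fin.pos_iff_ne_zero, ← finRotate_last]
    exact (finRotate _).injective.ne ha
  · simp only [hb, iff_false, not_lt, Fin.le_def, coe_finRotate_of_ne_last ha,
      coe_finRotate_of_ne_last hb]
    exact Nat.succ_le_succ hab.le

theorem finRotate_inv_lt_finRotate_inv_iff {a b : Fin (m + 1)} (hab : a < b) :
    (finRotate (m + 1))⁻¹ b < (finRotate (m + 1))⁻¹ a ↔ a = 0 := by
  have hb : b ≠ 0 := (lt_of_le_of_lt (Fin.zero_le a) hab).ne'
  rw [Perm.coe_inv]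
  by_cases ha : a = 0
  · subst ha
    refine iff_of_true ?_ rfl
    rw [(finRotate _).symm_apply_eq.mpr finRotate_last.symm, Fin.lt_last_iff_ne_last,
      ← (finRotate _).symm_apply_eq.mpr finRotate_last.symm]
    exact (finRotate _).symm.injective.ne hb
  · simp only [ha, iff_false, not_lt, Fin.le_def, coe_finRotate_symm_of_ne_zero ha,
      coe_finRotate_symm_of_ne_zero hb]
    have := Fin.pos_iff_ne_zero.mpr ha
    rw [Fin.lt_def] at hab this
    omega

theorem swap_castSucc_succ_lt_iff {i : Fin (m + 1)} {a b : Fin (m + 2)} (hab : a < b) :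
    swap i.castSucc i.succ b < swap i.castSucc i.succ a ↔ a = i.castSucc ∧ b = i.succ := by
  rw [swap_apply_def, swap_apply_def]
  split_ifs <;> simp only [Fin.lt_def, Fin.ext_iff, Fin.val_castSucc, Fin.val_succ] at * <;> omega

section Inversions

variable {τ : Perm (Fin (k + 1))}

theorem inversions_of_permContains_finRotate (h : PermContains τ (finRotate (m + 1))) :
    (∀ a b, a < b → τ a < τ b) ∨ ∀ a b, a < b → (τ b < τ a ↔ b = Fin.last k) := by
  obtain ⟨f, hf, hτ⟩ := h
  have hinv a b (hab : a < b) : τ b < τ a ↔ f b = Fin.last m :=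
    (hτ b a).trans (finRotate_lt_finRotate_iff (hf hab))
  by_cases hlast : f (Fin.last k) = Fin.last m
  · refine Or.inr fun a b hab => (hinv a b hab).trans ⟨fun hb => ?_, fun hb => hb ▸ hlast⟩
    exact hf.injective (hb.trans hlast.symm)
  · refine Or.inl fun a b hab => (τ.injective.ne hab.ne).lt_of_le (not_lt.mp fun hba => hlast ?_)
    exact le_antisymm (Fin.le_last _) ((hinv a b hab).mp hba ▸ hf.monotone (Fin.le_last b))

theorem inversions_of_permContains_finRotate_inv (h : PermContains τ (finRotate (m + 1))⁻¹) :
    (∀ a b, a < b → τ a < τ b) ∨ ∀ a b, a < b → (τ b < τ a ↔ a = 0) := by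
  obtain ⟨f, hf, hτ⟩ := h
  have hinv a b (hab : a < b) : τ b < τ a ↔ f a = 0 :=
    (hτ b a).trans (finRotate_inv_lt_finRotate_inv_iff (hf hab))
  by_cases hzero : f 0 = 0
  · refine Or.inr fun a b hab => (hinv a b hab).trans ⟨fun ha => ?_, fun ha => ha ▸ hzero⟩
    exact hf.injective (ha.trans hzero.symm)
  · refine Or.inl fun a b hab => (τ.injective.ne hab.ne).lt_of_le (not_lt.mp fun hba => hzero ?_)
    exact le_antisymm ((hinv a b hab).mp hba ▸ hf.monotone (Fin.zero_le a)) (Fin.zero_le _)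

end Inversions

theorem exists_of_permContains_swap {τ : Perm (Fin k)} {i : Fin (m + 1)}
    (h : PermContains τ (swap i.castSucc i.succ)) :
    ∃ f : Fin k → Fin (m + 2), StrictMono f ∧
      ∀ a b, a < b → τ b < τ a → f a = i.castSucc ∧ f b = i.succ := by
  obtain ⟨f, hf, hτ⟩ := h
  exact ⟨f, hf, fun a b hab hba => (swap_castSucc_succ_lt_iff (hf hab)).mp ((hτ b a).mp hba)⟩

theorem inversion_unique_of_permContains_swap {τ : Perm (Fin k)} {i : Fin (m + 1)}
    (h : PermContains τ (swap i.castSucc i.succ)) :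
    ∀ a b c d, a < b → c < d → τ b < τ a → τ d < τ c → a = c ∧ b = d := by
  obtain ⟨f, hf, hinv⟩ := exists_of_permContains_swap h
  intro a b c d hab hcd hba hdc
  exact ⟨hf.injective ((hinv a b hab hba).1.trans (hinv c d hcd hdc).1.symm),
    hf.injective ((hinv a b hab hba).2.trans (hinv c d hcd hdc).2.symm)⟩

theorem inversion_fst_eq_zero_of_permContains_swap {τ : Perm (Fin (k + 1))}
    (h : PermContains τ (swap (0 : Fin (m + 1)).castSucc (0 : Fin (m + 1)).succ)) :
    ∀ a b, a < b → τ b < τ a → a = 0 := by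
  obtain ⟨f, hf, hinv⟩ := exists_of_permContains_swap h
  intro a b hab hba
  have hfa : f a = 0 := (hinv a b hab hba).1
  exact hf.injective (le_antisymm (hfa ▸ Fin.zero_le _) (hf.monotone (Fin.zero_le a)))

theorem inversion_snd_eq_last_of_permContains_swap {τ : Perm (Fin (k + 1))}
    (h : PermContains τ (swap (Fin.last m).castSucc (Fin.last m).succ)) :
    ∀ a b, a < b → τ b < τ a → b = Fin.last k := by
  obtain ⟨f, hf, hinv⟩ := exists_of_permContains_swap h
  intro a b hab hba
  have hfb : f b = Fin.last (m + 1) := (hinv a b hab hba).2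
  exact hf.injective (le_antisymm (hf.monotone (Fin.le_last b)) (hfb ▸ Fin.le_last _))

section PatternsOfLengthThree

set_option synthInstance.maxSize 1000

variable {τ : Perm (Fin 3)}

theorem eq_p321_of_permContains_revPerm (h : PermContains τ (Fin.revPerm : Perm (Fin n))) :
    τ = p321 := by
  have hτ := inversions_of_permContains_revPerm h
  clear h; revert τ; decide

theorem mem_of_permContains_finRotate (h : PermContains τ (finRotate (m + 1))) :
    τ ∈ ({p123, p231} : Finset (Perm (Fin 3))) := by
  have hτ := inversions_of_permContains_finRotate h
  clear h; revert τ; decide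

theorem mem_of_permContains_finRotate_inv (h : PermContains τ (finRotate (m + 1))⁻¹) :
    τ ∈ ({p123, p312} : Finset (Perm (Fin 3))) := by
  have hτ := inversions_of_permContains_finRotate_inv h
  clear h; revert τ; decide

theorem mem_of_permContains_swap (i : Fin (m + 1)) (h : PermContains τ (swap i.castSucc i.succ)) :
    τ ∈ ({p123, p132, p213} : Finset (Perm (Fin 3))) := by
  have hτ := inversion_unique_of_permContains_swap h
  clear h; revert τ; decide

theorem mem_of_permContains_swap_zero
    (h : PermContains τ (swap (0 : Fin (m + 1)).castSucc (0 : Fin (m + 1)).succ)) :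
    τ ∈ ({p123, p213} : Finset (Perm (Fin 3))) := by
  have hτ := inversion_unique_of_permContains_swap h
  have hτ₀ := inversion_fst_eq_zero_of_permContains_swap h
  clear h; revert τ; decide

theorem mem_of_permContains_swap_last
    (h : PermContains τ (swap (Fin.last m).castSucc (Fin.last m).succ)) :
    τ ∈ ({p123, p132} : Finset (Perm (Fin 3))) := by
  have hτ := inversion_unique_of_permContains_swap h
  have hτ₂ := inversion_snd_eq_last_of_permContains_swap h
  clear h; revert τ; decide

end PatternsOfLengthThree

def avoidSet3 (n : ℕ) (T : Finset (Perm (Fin 3))) : Set (Perm (Fin n)) :=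
  avoidSet n ((fun τ => (⟨3, τ⟩ : Σ k : ℕ, Perm (Fin k))) '' (T : Set (Perm (Fin 3))))

theorem mem_avoidSet3 {T : Finset (Perm (Fin 3))} {π : Perm (Fin n)} :
    π ∈ avoidSet3 n T ↔ ∀ τ ∈ T, ¬ PermContains τ π := by
  simp [avoidSet3, avoidSet]

theorem mem_avoidSet3_of_disjoint {T P : Finset (Perm (Fin 3))} {π : Perm (Fin n)}
    (hπ : ∀ τ, PermContains τ π → τ ∈ P) (hT : Disjoint T P) : π ∈ avoidSet3 n T :=
  mem_avoidSet3.mpr fun τ hτT hτ => disjoint_left.mp hT hτT (hπ τ hτ)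

theorem revPerm_mul_mem_avoidSet3 {T : Finset (Perm (Fin 3))} {π : Perm (Fin n)}
    (hπ : π ∈ avoidSet3 n (T.image (Fin.revPerm * ·))) : Fin.revPerm * π ∈ avoidSet3 n T :=
  mem_avoidSet3.mpr fun _ hτT hτ =>
    mem_avoidSet3.mp hπ _ (mem_image_of_mem _ hτT) (permContains_revPerm_mul_iff.mp hτ)

/-- Permutations whose patterns of length three all lie in `P` belong to `⟨S_n(T)⟩`
(`mem_closure_of_admits`). -/
def Admits (T P : Finset (Perm (Fin 3))) : Prop :=
  Disjoint T P ∨ (p321 ∉ T ∧ Disjoint (T.image (Fin.revPerm * ·)) P)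

instance (T P : Finset (Perm (Fin 3))) : Decidable (Admits T P) :=
  inferInstanceAs (Decidable (_ ∨ _))

theorem mem_closure_of_admits {T P : Finset (Perm (Fin 3))} {π : Perm (Fin n)}
    (hπ : ∀ τ, PermContains τ π → τ ∈ P) (h : Admits T P) :
    π ∈ Subgroup.closure (avoidSet3 n T) := by
  rcases h with hT | ⟨h321, hT⟩
  · exact Subgroup.subset_closure (mem_avoidSet3_of_disjoint hπ hT)
  · have hrev : Fin.revPerm ∈ avoidSet3 n T :=
      mem_avoidSet3_of_disjoint (fun _ h => mem_singleton.mpr (eq_p321_of_permContains_revPerm h))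
        (disjoint_singleton_right.mpr h321)
    have hrevπ : Fin.revPerm * π ∈ avoidSet3 n T :=
      revPerm_mul_mem_avoidSet3 (mem_avoidSet3_of_disjoint hπ hT)
    simpa using mul_mem (inv_mem (Subgroup.subset_closure hrev)) (Subgroup.subset_closure hrevπ)

theorem admits_of_card_eq_three (T : Finset (Perm (Fin 3))) (hcard : T.card = 3)
    (h1 : ¬ ({p123, p321} : Finset (Perm (Fin 3))) ⊆ T)
    (h2 : T ≠ ({p132, p213, p321} : Finset (Perm (Fin 3))))
    (h3 : T ≠ ({p123, p231, p312} : Finset (Perm (Fin 3)))) :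
    Admits T {p123, p132, p213} ∨
      ((Admits T {p123, p231} ∨ Admits T {p123, p312}) ∧
        (Admits T {p123, p213} ∨ Admits T {p123, p132})) := by
  revert T; decide

theorem eq_top_of_swap_castSucc_succ_mem (H : Subgroup (Perm (Fin (m + 1))))
    (h : ∀ i : Fin m, swap i.castSucc i.succ ∈ H) : H = ⊤ := by
  rw [eq_top_iff,
    ← Subgroup.closure_eq_top_of_mclosure_eq_top (Perm.mclosure_swap_castSucc_succ m),
    Subgroup.closure_le, Set.range_subset_iff]
  exact h

theorem eq_top_of_finRotate_mem_of_swap_mem (H : Subgroup (Perm (Fin (m + 2))))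
    (hrot : finRotate (m + 2) ∈ H) (i : Fin (m + 1)) (hswap : swap i.castSucc i.succ ∈ H) :
    H = ⊤ := by
  rw [eq_top_iff,
    ← Perm.closure_cycle_adjacent_swap isCycle_finRotate support_finRotate i.castSucc,
    Subgroup.closure_le, Set.insert_subset_iff, Set.singleton_subset_iff, finRotate_apply,
    Fin.coeSucc_eq_succ]
  exact ⟨hrot, hswap⟩

theorem closure_avoid_three_patterns_of_S3 (T : Finset (Equiv.Perm (Fin 3)))
    (hcard : T.card = 3)
    (h1 : ¬ ({p123, p321} : Finset (Equiv.Perm (Fin 3))) ⊆ T)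
    (h2 : T ≠ ({p132, p213, p321} : Finset (Equiv.Perm (Fin 3))))
    (h3 : T ≠ ({p123, p231, p312} : Finset (Equiv.Perm (Fin 3)))) (n : ℕ) :
    Subgroup.closure (avoidSet n
      ((fun τ => (⟨3, τ⟩ : Σ k : ℕ, Equiv.Perm (Fin k))) '' (↑T : Set (Equiv.Perm (Fin 3))))) =
      ⊤ := by
  match n with
  | 0 | 1 => exact Subsingleton.elim _ _
  | m + 2 =>
    change Subgroup.closure (avoidSet3 (m + 2) T) = ⊤
    rcases admits_of_card_eq_three T hcard h1 h2 h3 with hswaps | ⟨hrot, hswap⟩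
    · exact eq_top_of_swap_castSucc_succ_mem _ fun i =>
        mem_closure_of_admits (fun _ => mem_of_permContains_swap i) hswaps
    have hrot_mem : finRotate (m + 2) ∈ Subgroup.closure (avoidSet3 (m + 2) T) := by
      rcases hrot with h | h
      · exact mem_closure_of_admits (fun _ => mem_of_permContains_finRotate) h
      · exact inv_inv (finRotate (m + 2)) ▸
          inv_mem (mem_closure_of_admits (fun _ => mem_of_permContains_finRotate_inv) h)
    rcases hswap with h | h
    · exact eq_top_of_finRotate_mem_of_swap_mem _ hrot_mem 0
        (mem_closure_of_admits (fun _ => mem_of_permContains_swap_zero) h)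
    · exact eq_top_of_finRotate_mem_of_swap_mem _ hrot_mem (Fin.last m)
        (mem_closure_of_admits (fun _ => mem_of_permContains_swap_last) h)
end
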